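/- arXiv:2601.19030 — 2 statements merged into one kernel-verified Lean document; each statement's English description precedes it below -/
import Mathlib

section
/- Fix a positive integer d and γ ∈ [0,1). Let Σ and Σcr be d×d real matrices with Σ symmetric positive definite, let φ₀ ∈ ℝ^d, set A := Σ − γ·Σcr and Bπ := (Σ⁻¹·Σcr)ᵀ. Assume that every complex eigenvalue μ of Bπ (viewed as a complex matrix) satisfies γ·|μ| < 1. Then A is invertible, the series ν := (1−γ)·Σ_{t≥0} γᵗ·(Bπ)ᵗ·φ₀ converges in ℝ^d, and the feature-dynamics coverage satisfies (1−γ)²·φ₀ᵀ·A⁻¹·Σ·A⁻ᵀ·φ₀ = νᵀ·Σ⁻¹·ν. -/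
open Matrix MeasureTheory ProbabilityTheory
open scoped Classical

noncomputable section

/-- Euclidean norm of a vector in `ℝ^d`. -/
def norm2 {d : ℕ} (v : Fin d → ℝ) : ℝ := Real.sqrt (v ⬝ᵥ v)

/-- The positive semidefinite square root of a matrix (junk value `0` if not PSD). -/
def psdSqrt {d : ℕ} (M : Matrix (Fin d) (Fin d) ℝ) : Matrix (Fin d) (Fin d) ℝ :=
  if h : M.PosSemidef then
    h.1.eigenvectorUnitary.1 * diagonal ((↑) ∘ (√·) ∘ h.1.eigenvalues) *
      (star h.1.eigenvectorUnitary : Matrix (Fin d) (Fin d) ℝ) else 0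

/-- Largest eigenvalue of a symmetric matrix (junk value `0` if not symmetric). -/
def lamMax {d : ℕ} (M : Matrix (Fin d) (Fin d) ℝ) : ℝ :=
  if h : M.IsHermitian then ⨆ i, h.eigenvalues i else 0

/-- Smallest eigenvalue of a symmetric matrix (junk value `0` if not symmetric). -/
def lamMin {d : ℕ} (M : Matrix (Fin d) (Fin d) ℝ) : ℝ :=
  if h : M.IsHermitian then ⨅ i, h.eigenvalues i else 0

/-- Smallest singular value. -/
def sigmaMin {d : ℕ} (M : Matrix (Fin d) (Fin d) ℝ) : ℝ := Real.sqrt (lamMin (Mᵀ * M))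

/-- Largest singular value (operator norm). -/
def sigmaMax {d : ℕ} (M : Matrix (Fin d) (Fin d) ℝ) : ℝ := Real.sqrt (lamMax (Mᵀ * M))

/-- Empirical covariance matrix `(1/n) ∑ᵢ WᵢWᵢᵀ`. -/
def empSigma {d n : ℕ} (W : Fin n → Fin d → ℝ) : Matrix (Fin d) (Fin d) ℝ :=
  (n : ℝ)⁻¹ • ∑ i, vecMulVec (W i) (W i)

/-- Empirical LSTDQ matrix `(1/n) ∑ᵢ Wᵢ(Wᵢ - γWᵢ')ᵀ`. -/
def empA {d n : ℕ} (γ : ℝ) (W W' : Fin n → Fin d → ℝ) : Matrix (Fin d) (Fin d) ℝ :=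
  (n : ℝ)⁻¹ • ∑ i, vecMulVec (W i) (W i - γ • W' i)

/-- Empirical LSTDQ vector `(1/n) ∑ᵢ RᵢWᵢ`. -/
def empb {d n : ℕ} (W : Fin n → Fin d → ℝ) (R : Fin n → ℝ) : Fin d → ℝ :=
  (n : ℝ)⁻¹ • ∑ i, R i • W i

open Filter

/-!
The Neumann series: since `γ Bπ` has spectral radius `< 1` (Gelfand's formula, applied to the
complexification), `∑ (γ Bπ)ᵗ` converges to `(1 - γ Bπ)⁻¹`, so `ν = (1 - γ) (1 - γ Bπ)⁻¹ φ₀`.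
Writing `A = Σ (1 - γ Bπ)ᵀ` gives `A⁻¹ Σ A⁻ᵀ = (1 - γ Bπ)⁻ᵀ Σ⁻ᵀ (1 - γ Bπ)⁻¹`, and the
quadratic forms of `Σ⁻ᵀ` and `Σ⁻¹` agree.
-/

section BanachAlgebra

variable {A : Type*} [NormedRing A] [NormedAlgebra ℂ A] [CompleteSpace A]

theorem summable_pow_of_spectralRadius_lt_one {a : A} (h : spectralRadius ℂ a < 1) :
    Summable (a ^ ·) := by
  obtain ⟨r, hρr, hr1⟩ := ENNReal.lt_iff_exists_nnreal_btwn.mp h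
  refine .of_norm_bounded_eventually_nat
    (summable_geometric_of_lt_one r.2 (by exact_mod_cast hr1)) ?_
  filter_upwards [(spectrum.pow_nnnorm_pow_one_div_tendsto_nhds_spectralRadius a).eventually_lt_const
    hρr, eventually_ne_atTop 0] with n hn hn0
  replace hn0 : (n : ℝ) ≠ 0 := Nat.cast_ne_zero.mpr hn0
  have := ENNReal.rpow_le_rpow hn.le (Nat.cast_nonneg n : (0 : ℝ) ≤ n)
  rw [← ENNReal.rpow_mul, one_div_mul_cancel hn0, ENNReal.rpow_one, ENNReal.rpow_natCast] at this
  exact_mod_cast this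

theorem spectralRadius_smul_lt_one [Nontrivial A] {c : ℂ} {a : A}
    (h : ∀ z ∈ spectrum ℂ a, ‖c‖ * ‖z‖ < 1) : spectralRadius ℂ (c • a) < 1 := by
  refine spectrum.spectralRadius_lt_of_forall_lt _ fun _ hz => ?_
  rw [spectrum.smul_eq_smul c a (spectrum.nonempty a)] at hz
  obtain ⟨z, hz, rfl⟩ := hz
  rw [← NNReal.coe_lt_coe]
  simpa [norm_smul] using h z hz

end BanachAlgebra

namespace Matrix

theorem summable_of_summable_map_ofReal {ι m n : Type*} {f : ι → Matrix m n ℝ}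
    (h : Summable fun k => (f k).map Complex.ofReal) : Summable f :=
  (Summable.map_iff_of_leftInverse (Complex.ofRealHom.toAddMonoidHom.mapMatrix (m := m) (n := n))
    Complex.reAddGroupHom.mapMatrix (continuous_id.matrix_map Complex.continuous_ofReal)
    (continuous_id.matrix_map Complex.continuous_re) fun M => by ext; simp).mp h

variable {n : Type*} [Fintype n]

section Algebra

variable {R : Type*} [CommRing R]

theorem dotProduct_transpose_mulVec_self (M : Matrix n n R) (x : n → R) :
    x ⬝ᵥ (Mᵀ *ᵥ x) = x ⬝ᵥ (M *ᵥ x) := by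
  rw [dotProduct_mulVec, vecMul_transpose, dotProduct_comm]

variable [DecidableEq n]

theorem sub_smul_eq_mul_transpose_one_sub {S C : Matrix n n R} (hS : IsUnit S.det) (c : R) :
    S - c • C = S * (1 - c • (S⁻¹ * C)ᵀ)ᵀ := by
  rw [transpose_sub, transpose_one, transpose_smul, transpose_transpose, Matrix.mul_sub,
    Matrix.mul_one, Matrix.mul_smul, ← Matrix.mul_assoc, mul_nonsing_inv S hS, Matrix.one_mul]

theorem dotProduct_mul_transpose_inv_mulVec {S : Matrix n n R} (hS : IsUnit S.det)
    (N : Matrix n n R) (v : n → R) :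
    v ⬝ᵥ ((S * Nᵀ)⁻¹ *ᵥ (S *ᵥ (((S * Nᵀ)⁻¹)ᵀ *ᵥ v))) =
      (N⁻¹ *ᵥ v) ⬝ᵥ (S⁻¹ *ᵥ (N⁻¹ *ᵥ v)) := by
  have hinv : (S * Nᵀ)⁻¹ = (N⁻¹)ᵀ * S⁻¹ := by rw [mul_inv_rev, transpose_nonsing_inv]
  rw [hinv, transpose_mul, transpose_transpose, ← mulVec_mulVec, ← mulVec_mulVec,
    mulVec_mulVec (M := S⁻¹) (N := S), nonsing_inv_mul S hS, one_mulVec, dotProduct_mulVec,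
    vecMul_transpose, dotProduct_transpose_mulVec_self]

end Algebra

variable [DecidableEq n]

theorem summable_smul_pow_of_forall_spectrum [Nonempty n] {M : Matrix n n ℝ} {c : ℝ}
    (h : ∀ z ∈ spectrum ℂ (M.map Complex.ofReal), |c| * ‖z‖ < 1) :
    Summable ((c • M) ^ ·) := by
  -- any norm will do: the `L∞` operator norm induces the usual topology on matrices
  let _ := Matrix.linftyOpNormedRing (n := n) (α := ℂ)
  let _ := Matrix.linftyOpNormedAlgebra (n := n) (R := ℂ) (α := ℂ)
  have hc : Summable (((c : ℂ) • M.map Complex.ofReal) ^ ·) :=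
    summable_pow_of_spectralRadius_lt_one (spectralRadius_smul_lt_one (by simpa using h))
  refine summable_of_summable_map_ofReal ?_
  convert hc using 2 with k
  change Complex.ofRealHom.mapMatrix ((c • M) ^ k) = _
  rw [map_pow]
  congr 1
  ext
  simp

variable {R : Type*} [CommRing R] [TopologicalSpace R] [IsTopologicalRing R] [T2Space R]

theorem isUnit_det_one_sub_of_summable_pow {M : Matrix n n R} (h : Summable (M ^ ·)) :
    IsUnit (1 - M).det :=
  isUnit_det_of_left_inverse h.tsum_pow_mul_one_sub

theorem hasSum_pow_mulVec {M : Matrix n n R} (h : Summable (M ^ ·)) (v : n → R) :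
    HasSum (fun k : ℕ => M ^ k *ᵥ v) ((1 - M)⁻¹ *ᵥ v) := by
  rw [inv_eq_left_inv h.tsum_pow_mul_one_sub]
  exact h.hasSum.map (mulVec.addMonoidHomLeft v) (continuous_id.matrix_mulVec continuous_const)

end Matrix

theorem stmt4_general (d : ℕ) (hd : 0 < d) (γ : ℝ) (hγ0 : 0 ≤ γ)
    (Sig Sigcr : Matrix (Fin d) (Fin d) ℝ) (hSig : Sig.PosDef) (φ₀ : Fin d → ℝ)
    (A Bpi : Matrix (Fin d) (Fin d) ℝ)
    (hA : A = Sig - γ • Sigcr) (hB : Bpi = (Sig⁻¹ * Sigcr)ᵀ)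
    (hspec : ∀ z ∈ spectrum ℂ (Bpi.map (Complex.ofReal : ℝ → ℂ)), γ * ‖z‖ < 1) :
    IsUnit A.det ∧ Summable (fun t : ℕ => γ ^ t • (Bpi ^ t *ᵥ φ₀)) ∧
      (let ν : Fin d → ℝ := (1 - γ) • ∑' t : ℕ, γ ^ t • (Bpi ^ t *ᵥ φ₀)
       (1 - γ) ^ 2 * (φ₀ ⬝ᵥ (A⁻¹ *ᵥ (Sig *ᵥ ((A⁻¹)ᵀ *ᵥ φ₀)))) = ν ⬝ᵥ (Sig⁻¹ *ᵥ ν)) := by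
  have : Nonempty (Fin d) := ⟨⟨0, hd⟩⟩
  have hSig_det : IsUnit Sig.det := (isUnit_iff_isUnit_det Sig).mp hSig.isUnit
  have hsum : Summable ((γ • Bpi) ^ ·) :=
    summable_smul_pow_of_forall_spectrum (by simpa [abs_of_nonneg hγ0] using hspec)
  have hA' : A = Sig * (1 - γ • Bpi)ᵀ := by
    rw [hA, hB, sub_smul_eq_mul_transpose_one_sub hSig_det]
  have hν : HasSum (fun t : ℕ => γ ^ t • (Bpi ^ t *ᵥ φ₀)) ((1 - γ • Bpi)⁻¹ *ᵥ φ₀) := by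
    simpa only [smul_pow, smul_mulVec] using hasSum_pow_mulVec hsum φ₀
  refine ⟨?_, hν.summable, ?_⟩
  · rw [hA', det_mul, det_transpose]
    exact hSig_det.mul (isUnit_det_one_sub_of_summable_pow hsum)
  · dsimp only
    rw [hν.tsum_eq, hA', dotProduct_mul_transpose_inv_mulVec hSig_det, mulVec_smul,
      smul_dotProduct, dotProduct_smul, smul_eq_mul, smul_eq_mul]
    ring

/-- Proposition 5.1 of the paper: under the spectral-radius condition
`ρ(Bπ) < 1/γ`, the matrix `A = Σ - γΣcr` is invertible, the discounted feature occupancy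
`ν = (1-γ) ∑ₜ γᵗ (Bπ)ᵗ φ₀` converges, and the feature-dynamics coverage equals `νᵀ Σ⁻¹ ν`. -/
theorem stmt4 (d : ℕ) (hd : 0 < d) (γ : ℝ) (hγ0 : 0 ≤ γ) (hγ1 : γ < 1)
    (Sig Sigcr : Matrix (Fin d) (Fin d) ℝ) (hSig : Sig.PosDef) (φ₀ : Fin d → ℝ)
    (A Bpi : Matrix (Fin d) (Fin d) ℝ)
    (hA : A = Sig - γ • Sigcr) (hB : Bpi = (Sig⁻¹ * Sigcr)ᵀ)
    (hspec : ∀ z ∈ spectrum ℂ (Bpi.map (Complex.ofReal : ℝ → ℂ)), γ * ‖z‖ < 1) :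
    IsUnit A.det ∧ Summable (fun t : ℕ => γ ^ t • (Bpi ^ t *ᵥ φ₀)) ∧
      (let ν : Fin d → ℝ := (1 - γ) • ∑' t : ℕ, γ ^ t • (Bpi ^ t *ᵥ φ₀)
       (1 - γ) ^ 2 * (φ₀ ⬝ᵥ (A⁻¹ *ᵥ (Sig *ᵥ ((A⁻¹)ᵀ *ᵥ φ₀)))) = ν ⬝ᵥ (Sig⁻¹ *ᵥ ν)) :=
  stmt4_general d hd γ hγ0 Sig Sigcr hSig φ₀ A Bpi hA hB hspec

end
end

section
/- Fix a positive integer d and γ ∈ [0,1). Let Σ and Σcr be d×d real matrices with Σ symmetric positive definite, let φ₀ ∈ ℝ^d, set A := Σ − γ·Σcr and Bπ := (Σ⁻¹·Σcr)ᵀ, and assume A is invertible. Suppose v ∈ ℝ^d satisfies the fixed-point equation v = (1−γ)·φ₀ + γ·Bπ·v. Then the feature-dynamics coverage satisfies (1−γ)²·φ₀ᵀ·A⁻¹·Σ·A⁻ᵀ·φ₀ = vᵀ·Σ⁻¹·v. -/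
open Matrix MeasureTheory ProbabilityTheory
open scoped Classical

noncomputable section

/-! Since `Σ` is symmetric, `Aᵀ Σ⁻¹ = I - γ Bπ`, so the fixed-point equation says
`Aᵀ (Σ⁻¹ v) = (1 - γ) φ₀`, i.e. `Σ⁻¹ v = (1 - γ) w` with `w := A⁻ᵀ φ₀`. Both sides of the
identity are then `(1 - γ)² wᵀ Σ w`. -/

namespace Matrix

variable {n R : Type*} [Fintype n] [DecidableEq n] [CommRing R]

theorem mulVec_eq_iff_eq_nonsing_inv_mulVec {M : Matrix n n R} (hM : IsUnit M.det)
    {x y : n → R} : M *ᵥ x = y ↔ x = M⁻¹ *ᵥ y := by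
  constructor
  · rintro rfl
    rw [mulVec_mulVec, nonsing_inv_mul _ hM, one_mulVec]
  · rintro rfl
    rw [mulVec_mulVec, mul_nonsing_inv _ hM, one_mulVec]

theorem dotProduct_nonsing_inv_mulVec_of_eq {S : Matrix n n R} (hS : IsUnit S.det)
    {u v : n → R} (h : S⁻¹ *ᵥ v = u) : v ⬝ᵥ (S⁻¹ *ᵥ v) = (S *ᵥ u) ⬝ᵥ u := by
  rw [h, (mulVec_eq_iff_eq_nonsing_inv_mulVec (isUnit_nonsing_inv_det S hS)).1 h,
    nonsing_inv_nonsing_inv S hS]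

theorem transpose_sub_smul_mul_nonsing_inv {S : Matrix n n R} (hSsymm : Sᵀ = S)
    (hS : IsUnit S.det) (C : Matrix n n R) (γ : R) :
    (S - γ • C)ᵀ * S⁻¹ = 1 - γ • (S⁻¹ * C)ᵀ := by
  rw [transpose_sub, transpose_smul, hSsymm, sub_mul, mul_nonsing_inv _ hS, smul_mul,
    transpose_mul, transpose_nonsing_inv, hSsymm]

theorem transpose_mulVec_nonsing_inv_mulVec_of_eq {S : Matrix n n R} (hSsymm : Sᵀ = S)
    (hS : IsUnit S.det) (C : Matrix n n R) {γ c : R} {φ v : n → R}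
    (hv : v = c • φ + γ • ((S⁻¹ * C)ᵀ *ᵥ v)) :
    (S - γ • C)ᵀ *ᵥ (S⁻¹ *ᵥ v) = c • φ := by
  rw [mulVec_mulVec, transpose_sub_smul_mul_nonsing_inv hSsymm hS, sub_mulVec, one_mulVec,
    smul_mulVec]
  nth_rewrite 1 [hv]
  module

end Matrix

theorem stmt11_general (d : ℕ) (γ : ℝ)
    (Sig Sigcr : Matrix (Fin d) (Fin d) ℝ) (hSig : Sig.PosDef) (φ₀ : Fin d → ℝ)
    (A Bpi : Matrix (Fin d) (Fin d) ℝ)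
    (hA : A = Sig - γ • Sigcr) (hB : Bpi = (Sig⁻¹ * Sigcr)ᵀ)
    (hAinv : IsUnit A.det)
    (v : Fin d → ℝ) (hv : v = (1 - γ) • φ₀ + γ • (Bpi *ᵥ v)) :
    (1 - γ) ^ 2 * (φ₀ ⬝ᵥ (A⁻¹ *ᵥ (Sig *ᵥ ((A⁻¹)ᵀ *ᵥ φ₀)))) = v ⬝ᵥ (Sig⁻¹ *ᵥ v) := by
  have hSdet : IsUnit Sig.det := (isUnit_iff_isUnit_det Sig).1 hSig.isUnit
  have hflow : Aᵀ *ᵥ (Sig⁻¹ *ᵥ v) = (1 - γ) • φ₀ := by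
    rw [hA]
    exact transpose_mulVec_nonsing_inv_mulVec_of_eq hSig.isHermitian.eq hSdet Sigcr (hB ▸ hv)
  set w := (A⁻¹)ᵀ *ᵥ φ₀
  have hw : Sig⁻¹ *ᵥ v = (1 - γ) • w := by
    rw [(mulVec_eq_iff_eq_nonsing_inv_mulVec (by rwa [det_transpose])).1 hflow, mulVec_smul,
      ← transpose_nonsing_inv]
  calc (1 - γ) ^ 2 * (φ₀ ⬝ᵥ (A⁻¹ *ᵥ (Sig *ᵥ w)))
      = (1 - γ) ^ 2 * ((Sig *ᵥ w) ⬝ᵥ w) := by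
        rw [← dotProduct_transpose_mulVec]
    _ = v ⬝ᵥ (Sig⁻¹ *ᵥ v) := by
        rw [dotProduct_nonsing_inv_mulVec_of_eq hSdet hw, mulVec_smul, smul_dotProduct,
          dotProduct_smul, smul_eq_mul, smul_eq_mul]
        ring

/-- algebraic core of Proposition 5.4 of the paper: if `v` solves the
Bellman-flow fixed-point equation `v = (1-γ)φ₀ + γ Bπ v`, then the feature-dynamics
coverage equals `vᵀ Σ⁻¹ v`. -/
theorem stmt11 (d : ℕ) (hd : 0 < d) (γ : ℝ) (hγ0 : 0 ≤ γ) (hγ1 : γ < 1)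
    (Sig Sigcr : Matrix (Fin d) (Fin d) ℝ) (hSig : Sig.PosDef) (φ₀ : Fin d → ℝ)
    (A Bpi : Matrix (Fin d) (Fin d) ℝ)
    (hA : A = Sig - γ • Sigcr) (hB : Bpi = (Sig⁻¹ * Sigcr)ᵀ)
    (hAinv : IsUnit A.det)
    (v : Fin d → ℝ) (hv : v = (1 - γ) • φ₀ + γ • (Bpi *ᵥ v)) :
    (1 - γ) ^ 2 * (φ₀ ⬝ᵥ (A⁻¹ *ᵥ (Sig *ᵥ ((A⁻¹)ᵀ *ᵥ φ₀)))) = v ⬝ᵥ (Sig⁻¹ *ᵥ v) :=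
  stmt11_general d γ Sig Sigcr hSig φ₀ A Bpi hA hB hAinv v hv

end
end
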